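/- Let Λ ⊆ ℝ^d be a repetitive Delone set of finite local complexity, let V : ℝ^d → ℝ be a bounded C³ Λ-equivariant non-degenerate function admitting a uniform local inverse family with constants R_V, K_V, let L : ℝ^r → ℝ^d be a linear map, R > 0, ε > 0, and let (𝒮, (H_B)) be an interaction satisfying condition (H2). Then there exist λ_* > 0 and ε' > 0 such that for every λ > λ_*, every a : ℤ^r → ℝ^d with a i ∈ Z_V and ‖a i - L i‖ ≤ R for all i, and every configuration u with sup_i ‖u i - a i‖ ≤ ε, one has ‖Q_i(u)‖/λ ≤ R_V (so that K_{a i}(-Q_i(u)/λ) is defined) and ‖K_{a i}(-Q_i(u)/λ) - a i‖ ≤ ε' for all i ∈ ℤ^r. -/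

import Mathlib

open Metric Set

noncomputable section

abbrev Euc (d : ℕ) : Type := EuclideanSpace ℝ (Fin d)

/-- The translate `Λ - y` of a point set. -/
def translateSet {d : ℕ} (Λ : Set (Euc d)) (y : Euc d) : Set (Euc d) :=
  (fun x => x - y) '' Λ

/-- A Delone set: uniformly discrete and relatively dense. -/
def IsDeloneSet {d : ℕ} (Λ : Set (Euc d)) : Prop :=
  (∃ r > 0, ∀ x ∈ Λ, ∀ y ∈ Λ, x ≠ y → r ≤ dist x y) ∧
  (∃ R > 0, ∀ y : Euc d, ∃ x ∈ Λ, x ∈ closedBall y R)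

/-- Finite local complexity. -/
def HasFLC {d : ℕ} (Λ : Set (Euc d)) : Prop :=
  ∀ R > 0, {s : Set (Euc d) | ∃ y : Euc d, s = translateSet Λ y ∩ closedBall 0 R}.Finite

/-- Repetitivity. -/
def IsRepetitive {d : ℕ} (Λ : Set (Euc d)) : Prop :=
  ∀ C : Set (Euc d), C ⊆ Λ → C.Finite →
    ∃ R > 0, ∀ y : Euc d, ∃ t : Euc d,
      (fun x => x + t) '' C ⊆ Λ ∧ (fun x => x + t) '' C ⊆ closedBall y R

/-- Λ-equivariant (pattern-equivariant) function. -/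
def IsPatternEquivariant {d : ℕ} (Λ : Set (Euc d)) (f : Euc d → ℝ) : Prop :=
  Continuous f ∧ ∃ R₀ > 0, ∀ x y : Euc d,
    translateSet Λ x ∩ closedBall 0 R₀ = translateSet Λ y ∩ closedBall 0 R₀ → f x = f y

/-- The Hessian of `V` at `x`, as the derivative of the gradient. -/
def Hess {d : ℕ} (V : Euc d → ℝ) (x : Euc d) : Euc d →L[ℝ] Euc d :=
  fderiv ℝ (gradient V) x

/-- The set of non-degenerate critical points of `V`. -/
def ZSet {d : ℕ} (V : Euc d → ℝ) : Set (Euc d) :=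
  {x | gradient V x = 0 ∧ IsUnit (Hess V x)}

/-- Non-degenerate potential: some point has vanishing gradient and invertible Hessian. -/
def NonDegeneratePotential {d : ℕ} (V : Euc d → ℝ) : Prop :=
  ∃ z : Euc d, gradient V z = 0 ∧ IsUnit (Hess V z)

/-- Bounded and C³. -/
def BoundedC3 {d : ℕ} (V : Euc d → ℝ) : Prop :=
  ContDiff ℝ 3 V ∧ ∃ M : ℝ, ∀ x, |V x| ≤ M

/-- Relatively dense subset of ℝ^d. -/
def RelativelyDense {d : ℕ} (S : Set (Euc d)) : Prop :=
  ∃ R > 0, ∀ y : Euc d, ∃ x ∈ S, x ∈ closedBall y R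

/-- An expanding linear automorphism with constant μ. -/
def Expanding {d : ℕ} (A : Euc d ≃L[ℝ] Euc d) (μ : ℝ) : Prop :=
  1 < μ ∧ ∀ x : Euc d, μ * ‖x‖ ≤ ‖A x‖

abbrev ZLat (r : ℕ) : Type := Fin r → ℤ

/-- The canonical embedding ℤ^r → ℝ^r. -/
def latCast {r : ℕ} (i : ZLat r) : EuclideanSpace ℝ (Fin r) :=
  WithLp.toLp 2 (fun k => (i k : ℝ))

abbrev Config (r d : ℕ) : Type := ZLat r → Euc d

/-- A configuration is of type σ(R) for the linear map L. -/
def OfTypeR {r d : ℕ} (L : EuclideanSpace ℝ (Fin r) →ₗ[ℝ] Euc d) (R : ℝ)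
    (u : Config r d) : Prop :=
  ∀ i : ZLat r, ‖u i - L (latCast i)‖ ≤ R

/-- An interaction: a collection of finite subsets of ℤ^r of cardinality ≥ 2, each index
lying in only finitely many of them, together with local functions H_B. -/
structure Interaction (r d : ℕ) where
  S : Set (Finset (ZLat r))
  card_ge : ∀ B ∈ S, 2 ≤ B.card
  locFin : ∀ i : ZLat r, {B | B ∈ S ∧ i ∈ B}.Finite
  H : Finset (ZLat r) → Config r d → ℝ
  local_dep : ∀ B ∈ S, ∀ u v : Config r d, (∀ j ∈ B, u j = v j) → H B u = H B v

namespace Interaction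

variable {r d : ℕ} (I : Interaction r d)

/-- The finite collection of interaction sets containing `i`. -/
def Si (i : ZLat r) : Finset (Finset (ZLat r)) := (I.locFin i).toFinset

/-- F_i(u) = Σ_{B ∈ 𝒮, i ∈ B} H_B(u). -/
def F (i : ZLat r) (u : Config r d) : ℝ := ∑ B ∈ I.Si i, I.H B u

/-- Q_i(u): the gradient of F_i with respect to the variable u_i. -/
def Q (i : ZLat r) (u : Config r d) : Euc d :=
  gradient (fun x => I.F i (Function.update u i x)) (u i)

/-- The finite set of indices that F_i depends on. -/
def J (i : ZLat r) : Finset (ZLat r) := (I.Si i).biUnion id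

/-- Patch a configuration using local data on `J i`. -/
def patch (i : ZLat r) (u : Config r d) (w : {j // j ∈ I.J i} → Euc d) : Config r d :=
  fun j => if h : j ∈ I.J i then w ⟨j, h⟩ else u j

/-- Restriction of a configuration to the finitely many variables `J i`. -/
def restr (i : ZLat r) (u : Config r d) : {j // j ∈ I.J i} → Euc d := fun j => u j.1

/-- F_i as a function of its finitely many variables. -/
def locF (i : ZLat r) (u : Config r d) : ({j // j ∈ I.J i} → Euc d) → ℝ :=
  fun w => I.F i (I.patch i u w)

/-- The full Hessian of F_i at u, in the finitely many variables `(u_j)_{j ∈ J i}`. -/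
def HessF (i : ZLat r) (u : Config r d) :
    ({j // j ∈ I.J i} → Euc d) →L[ℝ] ({j // j ∈ I.J i} → Euc d) →L[ℝ] ℝ :=
  fderiv ℝ (fderiv ℝ (I.locF i u)) (I.restr i u)

/-- Each F_i is C² in its finitely many variables. -/
def IsC2 : Prop := ∀ (i : ZLat r) (u : Config r d), ContDiff ℝ 2 (I.locF i u)

/-- Condition (H2). -/
def SatisfiesH2 : Prop :=
  ∀ (L : EuclideanSpace ℝ (Fin r) →ₗ[ℝ] Euc d) (R : ℝ), 0 < R →
    ∃ C : ℝ, ∀ u : Config r d, OfTypeR L R u →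
      ∀ i : ZLat r, ‖I.Q i u‖ + ‖I.HessF i u‖ ≤ C

end Interaction

/-- A uniform local inverse family for ∇V over the non-degenerate zero set. -/
def UnifLocalInv {d : ℕ} (V : Euc d → ℝ) (K : Euc d → Euc d → Euc d)
    (RV KV : ℝ) : Prop :=
  0 < RV ∧ 0 < KV ∧ ∀ z ∈ ZSet V,
    ContDiffOn ℝ 1 (K z) (closedBall 0 RV) ∧
    (∀ x ∈ closedBall 0 RV, gradient V (K z x) = x) ∧
    K z 0 = z ∧
    ∀ x ∈ closedBall 0 RV, ‖fderivWithin ℝ (K z) (closedBall 0 RV) x‖ ≤ KV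

/-- The derivatives DK_z are Lipschitz with constant C, uniformly over z ∈ Z_V. -/
def LipDerivInv {d : ℕ} (V : Euc d → ℝ) (K : Euc d → Euc d → Euc d)
    (RV C : ℝ) : Prop :=
  ∀ z ∈ ZSet V, ∀ x ∈ closedBall (0 : Euc d) RV, ∀ x' ∈ closedBall (0 : Euc d) RV,
    ‖fderivWithin ℝ (K z) (closedBall 0 RV) x - fderivWithin ℝ (K z) (closedBall 0 RV) x'‖
      ≤ C * ‖x - x'‖

/-!
By (H2), `Q_i` is uniformly bounded, say by `C`, on configurations of type `σ(R + ε)`, and every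
`u` within `ε` of an admissible `a` is such a configuration. Hence `‖Q_i(u)‖ / λ ≤ C / λ ≤ R_V`
once `λ > C / R_V`, and the mean value inequality for `K_{a i}`, whose derivative is bounded by
`K_V` on the ball of radius `R_V`, gives `‖K_{a i}(-Q_i(u)/λ) - a i‖ ≤ K_V R_V`.
-/

lemma OfTypeR.mono {r d : ℕ} {L : EuclideanSpace ℝ (Fin r) →ₗ[ℝ] Euc d} {R R' : ℝ}
    {u : Config r d} (hu : OfTypeR L R u) (hRR' : R ≤ R') : OfTypeR L R' u :=
  fun i => (hu i).trans hRR'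

lemma OfTypeR.of_norm_sub_le {r d : ℕ} {L : EuclideanSpace ℝ (Fin r) →ₗ[ℝ] Euc d} {R ε : ℝ}
    {a u : Config r d} (ha : OfTypeR L R a) (hu : ∀ i, ‖u i - a i‖ ≤ ε) :
    OfTypeR L (R + ε) u := fun i =>
  calc ‖u i - L (latCast i)‖ ≤ ‖u i - a i‖ + ‖a i - L (latCast i)‖ :=
        norm_sub_le_norm_sub_add_norm_sub _ _ _
    _ ≤ R + ε := by linarith [hu i, ha i]

lemma ofTypeR_latCast {r d : ℕ} (L : EuclideanSpace ℝ (Fin r) →ₗ[ℝ] Euc d) {R : ℝ}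
    (hR : 0 ≤ R) : OfTypeR L R (fun i => L (latCast i)) := fun i => by
  simpa using hR

namespace Interaction

lemma SatisfiesH2.exists_norm_Q_le {r d : ℕ} {I : Interaction r d} (hH2 : I.SatisfiesH2)
    (L : EuclideanSpace ℝ (Fin r) →ₗ[ℝ] Euc d) (R : ℝ) :
    ∃ C, 0 ≤ C ∧ ∀ u : Config r d, OfTypeR L R u → ∀ i, ‖I.Q i u‖ ≤ C := by
  obtain ⟨C, hC⟩ := hH2 L (max R 1) (by positivity)
  refine ⟨C, ?_, fun u hu i => ?_⟩
  · have hlin := hC _ (ofTypeR_latCast L (by positivity)) 0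
    linarith [norm_nonneg (I.Q 0 fun i => L (latCast i)),
      norm_nonneg (I.HessF 0 fun i => L (latCast i))]
  · linarith [hC u (hu.mono (le_max_left R 1)) i, norm_nonneg (I.HessF i u)]

end Interaction

lemma UnifLocalInv.norm_sub_le {d : ℕ} {V : Euc d → ℝ} {K : Euc d → Euc d → Euc d}
    {RV KV : ℝ} (hK : UnifLocalInv V K RV KV) {z : Euc d} (hz : z ∈ ZSet V) {x : Euc d}
    (hx : ‖x‖ ≤ RV) : ‖K z x - z‖ ≤ KV * ‖x‖ := by
  obtain ⟨hRV, -, hKz⟩ := hK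
  obtain ⟨hdiff, -, hK0, hbound⟩ := hKz z hz
  have hmv := (convex_closedBall (0 : Euc d) RV).norm_image_sub_le_of_norm_fderivWithin_le
    (hdiff.differentiableOn one_ne_zero) hbound (mem_closedBall_self hRV.le)
    (mem_closedBall_zero_iff.mpr hx)
  rwa [hK0, sub_zero] at hmv

lemma norm_neg_one_div_smul {E : Type*} [NormedAddCommGroup E] [NormedSpace ℝ E] {lam : ℝ}
    (hlam : 0 < lam) (q : E) : ‖-((1 / lam) • q)‖ = ‖q‖ / lam := by
  rw [norm_neg, norm_smul, Real.norm_of_nonneg (by positivity), one_div_mul_eq_div]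

theorem antiIntegrable_map_wellDefined_general {d r : ℕ}
    (V : Euc d → ℝ)
    (K : Euc d → Euc d → Euc d) (RV KV : ℝ) (hK : UnifLocalInv V K RV KV)
    (L : EuclideanSpace ℝ (Fin r) →ₗ[ℝ] Euc d) (R : ℝ) (ε : ℝ)
    (I : Interaction r d) (hH2 : I.SatisfiesH2) :
    ∃ lams > (0 : ℝ), ∃ ε' > (0 : ℝ), ∀ lam : ℝ, lam > lams →
      ∀ a : Config r d, (∀ i : ZLat r, a i ∈ ZSet V ∧ ‖a i - L (latCast i)‖ ≤ R) →
        ∀ u : Config r d, (∀ i : ZLat r, ‖u i - a i‖ ≤ ε) →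
          ∀ i : ZLat r,
            ‖I.Q i u‖ / lam ≤ RV ∧
            ‖K (a i) (-((1 / lam) • I.Q i u)) - a i‖ ≤ ε' := by
  obtain ⟨C, hC0, hC⟩ := hH2.exists_norm_Q_le L (R + ε)
  have hRV : 0 < RV := hK.1
  refine ⟨C / RV + 1, by positivity, KV * RV, mul_pos hK.2.1 hRV, ?_⟩
  intro lam hlam a ha u hu i
  have hlam0 : 0 < lam := by linarith [div_nonneg hC0 hRV.le]
  have hCRV : C ≤ lam * RV := by
    have := (div_lt_iff₀ hRV).mp (by linarith : C / RV < lam)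
    linarith
  have hQ : ‖I.Q i u‖ ≤ C := hC u (OfTypeR.of_norm_sub_le (fun j => (ha j).2) hu) i
  have hQlam : ‖I.Q i u‖ / lam ≤ RV := (div_le_iff₀ hlam0).mpr (by linarith)
  refine ⟨hQlam, ?_⟩
  rw [← norm_neg_one_div_smul hlam0] at hQlam
  calc ‖K (a i) (-((1 / lam) • I.Q i u)) - a i‖
      ≤ KV * ‖-((1 / lam) • I.Q i u)‖ := hK.norm_sub_le (ha i).1 hQlam
    _ ≤ KV * RV := mul_le_mul_of_nonneg_left hQlam hK.2.1.le

/-- Lemma: the anti-integrable-limit map is well defined for λ large. -/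
theorem antiIntegrable_map_wellDefined {d r : ℕ}
    (Λ : Set (Euc d)) (hDel : IsDeloneSet Λ) (hRep : IsRepetitive Λ) (hFLC : HasFLC Λ)
    (V : Euc d → ℝ) (hV : BoundedC3 V) (hVeq : IsPatternEquivariant Λ V)
    (hVnd : NonDegeneratePotential V)
    (K : Euc d → Euc d → Euc d) (RV KV : ℝ) (hK : UnifLocalInv V K RV KV)
    (L : EuclideanSpace ℝ (Fin r) →ₗ[ℝ] Euc d) (R : ℝ) (hR : 0 < R) (ε : ℝ) (hε : 0 < ε)
    (I : Interaction r d) (hC2 : I.IsC2) (hH2 : I.SatisfiesH2) :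
    ∃ lams > (0 : ℝ), ∃ ε' > (0 : ℝ), ∀ lam : ℝ, lam > lams →
      ∀ a : Config r d, (∀ i : ZLat r, a i ∈ ZSet V ∧ ‖a i - L (latCast i)‖ ≤ R) →
        ∀ u : Config r d, (∀ i : ZLat r, ‖u i - a i‖ ≤ ε) →
          ∀ i : ZLat r,
            ‖I.Q i u‖ / lam ≤ RV ∧
            ‖K (a i) (-((1 / lam) • I.Q i u)) - a i‖ ≤ ε' :=
  antiIntegrable_map_wellDefined_general V K RV KV hK L R ε I hH2
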